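/- Every finite chordal graph is either complete or has a simplicial vertex, i.e., a vertex whose neighborhood is a clique. -/

import Mathlib

/-- An induced (chordless) cycle of length `p` in a simple graph. -/
def SimpleGraph.IsInducedCycle {V : Type*} (G : SimpleGraph V) (p : ℕ) : Prop :=
  ∃ f : ZMod p → V, Function.Injective f ∧
    ∀ i j : ZMod p, G.Adj (f i) (f j) ↔ j = i + 1 ∨ i = j + 1

/-- A graph is chordal if it has no induced cycle of length at least 4. -/
def SimpleGraph.Chordal {V : Type*} (G : SimpleGraph V) : Prop :=
  ∀ p : ℕ, 4 ≤ p → ¬ G.IsInducedCycle p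

/-!
Dirac's argument. If `s` is not a clique, pick non-adjacent `x, y ∈ s`, let `C` be the component
of `y` in `s` minus the closed neighbourhood of `x`, and `S` the vertices of `s \ C` adjacent to
`C`. Every vertex of `S` is adjacent to `x`, so two non-adjacent vertices of `S` would close,
through `x` and a shortest path across `C`, an induced cycle of length at least 4. Hence `S` is a
clique separating `C` from the rest `D ∋ x` of `s`. By induction, `C ∪ S` and `D ∪ S` are cliques
or contain two non-adjacent simplicial vertices, one of which lies outside the clique `S`; a
simplicial vertex of `C ∪ S` lying in `C` is simplicial in `s`, since its neighbours in `s` stay in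
`C ∪ S`, and likewise for `D`. This yields two non-adjacent simplicial vertices of `s`.
-/

namespace SimpleGraph

variable {V : Type*} {G : SimpleGraph V}

theorem isInducedCycle_of_injOn {n : ℕ} [NeZero n] (f : ℕ → V) (hf : Set.InjOn f (Set.Iio n))
    (hadj : ∀ i < n, ∀ j < n, G.Adj (f i) (f j) ↔
      j = i + 1 ∨ i = j + 1 ∨ (i = 0 ∧ j = n - 1) ∨ (j = 0 ∧ i = n - 1)) :
    G.IsInducedCycle n := by
  have eq_add_one_iff (i j : ZMod n) :
      j = i + 1 ↔ j.val = i.val + 1 ∨ (i.val = n - 1 ∧ j.val = 0) := by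
    rw [← (ZMod.val_injective n).eq_iff, ZMod.val_add, ZMod.val_one_eq_one_mod, Nat.add_mod_mod]
    have := j.val_lt
    rcases (Nat.succ_le_of_lt i.val_lt).lt_or_eq with h | h
    · rw [Nat.mod_eq_of_lt h]; omega
    · rw [show i.val + 1 = n from h, Nat.mod_self]; omega
  refine ⟨fun i ↦ f i.val, fun i j h ↦ ZMod.val_injective n (hf i.val_lt j.val_lt h),
    fun i j ↦ ?_⟩
  rw [hadj _ i.val_lt _ j.val_lt, eq_add_one_iff, eq_add_one_iff]
  omega

namespace Walk

def IsInducedPath {u v : V} (w : G.Walk u v) : Prop :=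
  w.IsPath ∧ ∀ i ≤ w.length, ∀ j ≤ w.length,
    (G.Adj (w.getVert i) (w.getVert j) ↔ j = i + 1 ∨ i = j + 1)

theorem exists_isInducedPath {T : Set V} {a b : V} (w : G.Walk a b)
    (hw : ∀ z ∈ w.support, z ∈ T) :
    ∃ p : G.Walk a b, p.IsInducedPath ∧ ∀ z ∈ p.support, z ∈ T := by
  classical
  obtain ⟨p, ⟨hp, hpT⟩, hmin⟩ := (measure fun p : G.Walk a b ↦ p.length).wf.has_min
    {p | p.IsPath ∧ ∀ z ∈ p.support, z ∈ T}
    ⟨w.bypass, w.bypass_isPath, fun z hz ↦ hw z (w.support_bypass_subset_support hz)⟩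
  have no_shortcut {i j : ℕ} (hij : i + 1 < j) (hj : j ≤ p.length) :
      ¬ G.Adj (p.getVert i) (p.getVert j) := by
    intro h
    let q := (p.take i).append (cons h (p.drop j))
    have hq : q.length < p.length := by
      simp only [q, length_append, length_cons, take_length, drop_length]; omega
    have hqT : ∀ z ∈ q.support, z ∈ T := by
      intro z hz
      rcases mem_support_append_iff _ _ |>.1 hz with hz | hz
      · exact hpT z ((p.isSubwalk_take i).support_subset hz)
      rcases (List.mem_cons.1 (support_cons _ _ ▸ hz)) with rfl | hz
      · exact hpT _ (p.getVert_mem_support i)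
      · exact hpT z ((p.isSubwalk_drop j).support_subset hz)
    exact hmin q.bypass ⟨q.bypass_isPath, fun z hz ↦ hqT z (q.support_bypass_subset_support hz)⟩
      (q.length_bypass_le_length.trans_lt hq)
  refine ⟨p, ⟨hp, fun i hi j hj ↦ ⟨fun h ↦ ?_, ?_⟩⟩, hpT⟩
  · have : i ≠ j := by rintro rfl; exact h.ne rfl
    rcases lt_trichotomy (i + 1) j with hij | hij | hij
    · exact absurd h (no_shortcut hij hj)
    · exact Or.inl hij.symm
    rcases lt_trichotomy (j + 1) i with hji | hji | hji
    · exact absurd h.symm (no_shortcut hji hi)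
    · exact Or.inr hji.symm
    · omega
  · rintro (rfl | rfl)
    · exact p.adj_getVert_succ (by omega)
    · exact (p.adj_getVert_succ (by omega)).symm

theorem IsInducedPath.isInducedCycle_cons {x a b : V} {w : G.Walk a b} (hw : w.IsInducedPath)
    (hxa : G.Adj x a) (hxw : x ∉ w.support) (hx : ∀ z ∈ w.support, G.Adj x z ↔ z = a ∨ z = b) :
    G.IsInducedCycle (w.length + 2) := by
  have adj_getVert {k : ℕ} (hk : k ≤ w.length) : G.Adj x (w.getVert k) ↔ k = 0 ∨ k = w.length := by
    rw [hx _ (w.getVert_mem_support k), hw.1.getVert_eq_start_iff hk, hw.1.getVert_eq_end_iff hk]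
  refine isInducedCycle_of_injOn (cons hxa w).getVert ?_ fun i hi j hj ↦ ?_
  · refine ((cons_isPath_iff _ _).2 ⟨hw.1, hxw⟩).getVert_injOn.mono fun k hk ↦ ?_
    simp only [Set.mem_Iio] at hk
    simp only [Set.mem_ofPred_eq, length_cons]
    omega
  · rcases i with _ | i <;> rcases j with _ | j
    · simp
    · rw [getVert_zero, getVert_cons_succ, adj_getVert (by omega)]; omega
    · rw [getVert_zero, getVert_cons_succ, G.adj_comm, adj_getVert (by omega)]; omega
    · rw [getVert_cons_succ, getVert_cons_succ, hw.2 i (by omega) j (by omega)]; omega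

end Walk

def IsSimplicialIn (G : SimpleGraph V) (s : Set V) (v : V) : Prop :=
  G.IsClique (G.neighborSet v ∩ s)

def reachableWithin (G : SimpleGraph V) (t : Set V) (y : V) : Set V :=
  {c | ∃ w : G.Walk y c, ∀ z ∈ w.support, z ∈ t}

theorem exists_isSimplicialIn_of_separator {s C S : Set V} (hC : C.Nonempty) (hS : G.IsClique S)
    (hsep : ∀ c ∈ C, ∀ z ∈ s, G.Adj c z → z ∈ C ∪ S)
    (hCS : ¬ G.IsClique (C ∪ S) → ∃ u ∈ C ∪ S, ∃ v ∈ C ∪ S, u ≠ v ∧ ¬ G.Adj u v ∧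
      G.IsSimplicialIn (C ∪ S) u ∧ G.IsSimplicialIn (C ∪ S) v) :
    ∃ c ∈ C, G.IsSimplicialIn s c := by
  have of_union {c : V} (hc : c ∈ C) (h : G.IsSimplicialIn (C ∪ S) c) : G.IsSimplicialIn s c :=
    IsClique.subset (s := G.neighborSet c ∩ (C ∪ S)) (fun z hz ↦ ⟨hz.1, hsep c hc z hz.2 hz.1⟩) h
  by_cases hclique : G.IsClique (C ∪ S)
  · obtain ⟨c, hc⟩ := hC
    exact ⟨c, hc, of_union hc (hclique.subset Set.inter_subset_right)⟩
  obtain ⟨u, hu, v, hv, huv, hnuv, hsu, hsv⟩ := hCS hclique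
  rcases hu with hu | hu
  · exact ⟨u, hu, of_union hu hsu⟩
  rcases hv with hv | hv
  · exact ⟨v, hv, of_union hv hsv⟩
  exact absurd (hS hu hv huv) hnuv

namespace Chordal

theorem adj_of_walk (hG : G.Chordal) {x a b : V} (hxa : G.Adj x a) (hxb : G.Adj x b)
    (hab : a ≠ b) (w : G.Walk a b) (hw : ∀ z ∈ w.support, z = a ∨ z = b ∨ (z ≠ x ∧ ¬ G.Adj x z)) :
    G.Adj a b := by
  by_contra hnab
  obtain ⟨p, hp, hpT⟩ := w.exists_isInducedPath hw
  have hlen : 2 ≤ p.length := by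
    have hne0 : p.length ≠ 0 := mt p.eq_of_length_eq_zero hab
    have hne1 : p.length ≠ 1 := fun h ↦ hnab <| by
      simpa using (hp.2 0 (Nat.zero_le _) p.length le_rfl).2 (Or.inl h)
    omega
  refine hG _ (by omega) (hp.isInducedCycle_cons hxa (fun hx ↦ ?_) fun z hz ↦ ?_)
  · rcases hpT x hx with h | h | h
    · exact hxa.ne h
    · exact hxb.ne h
    · exact h.1 rfl
  · rcases hpT z hz with rfl | rfl | ⟨-, h⟩
    · simp [hxa]
    · simp [hxb]
    · exact iff_of_false h (by rintro (rfl | rfl) <;> contradiction)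

theorem isClique_neighbors_of_reachableWithin (hG : G.Chordal) {x y : V} {t : Set V}
    (ht : ∀ z ∈ t, z ≠ x ∧ ¬ G.Adj x z) :
    G.IsClique {a | G.Adj x a ∧ ∃ c ∈ G.reachableWithin t y, G.Adj c a} := by
  rintro a ⟨hxa, c, ⟨w, hw⟩, hca⟩ b ⟨hxb, d, ⟨w', hw'⟩, hdb⟩ hab
  refine hG.adj_of_walk hxa hxb hab (.cons hca.symm (w.reverse.append (w'.concat hdb)))
    fun z hz ↦ ?_
  simp only [Walk.support_cons, Walk.mem_support_append_iff, Walk.support_reverse,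
    Walk.support_concat, List.mem_cons, List.mem_reverse, List.mem_append, List.not_mem_nil,
    or_false] at hz
  rcases hz with rfl | hz | hz | rfl
  · exact Or.inl rfl
  · exact Or.inr (Or.inr (ht z (hw z hz)))
  · exact Or.inr (Or.inr (ht z (hw' z hz)))
  · exact Or.inr (Or.inl rfl)

theorem exists_clique_separator (hG : G.Chordal) {s : Set V} {x y : V} (hy : y ∈ s)
    (hxy : x ≠ y) (hnxy : ¬ G.Adj x y) :
    ∃ C S : Set V, y ∈ C ∧ Disjoint C S ∧ x ∉ C ∪ S ∧ C ∪ S ⊆ s ∧ G.IsClique S ∧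
      ∀ c ∈ C, ∀ z ∈ s, G.Adj c z → z ∈ C ∪ S := by
  set t := {z ∈ s | z ≠ x ∧ ¬ G.Adj x z}
  set C := G.reachableWithin t y
  have hCt : C ⊆ t := fun c ⟨w, hw⟩ ↦ hw c w.end_mem_support
  have mem_of_adj {c z : V} (hc : c ∈ C) (hz : z ∈ t) (hcz : G.Adj c z) : z ∈ C := by
    obtain ⟨w, hw⟩ := hc
    refine ⟨w.concat hcz, fun u hu ↦ ?_⟩
    rw [Walk.support_concat, List.mem_append, List.mem_singleton] at hu
    rcases hu with hu | rfl
    exacts [hw u hu, hz]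
  have hyt : y ∈ t := ⟨hy, hxy.symm, hnxy⟩
  refine ⟨C, {z ∈ s | z ∉ C ∧ ∃ c ∈ C, G.Adj c z}, ⟨.nil, by simpa using hyt⟩,
    Set.disjoint_left.2 fun z hz h ↦ h.2.1 hz, ?_,
    Set.union_subset (hCt.trans (Set.sep_subset _ _)) (Set.sep_subset _ _), ?_, ?_⟩
  · rintro (hx | ⟨-, -, c, hc, hcx⟩)
    exacts [(hCt hx).2.1 rfl, (hCt hc).2.2 hcx.symm]
  · refine (hG.isClique_neighbors_of_reachableWithin (y := y) (t := t) fun z hz ↦ hz.2).subset ?_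
    rintro a ⟨ha, haC, c, hc, hca⟩
    refine ⟨by_contra fun hxa ↦ haC (mem_of_adj hc ⟨ha, ?_, hxa⟩ hca), c, hc, hca⟩
    rintro rfl
    exact (hCt hc).2.2 hca.symm
  · intro c hc z hz hcz
    by_cases hzC : z ∈ C
    exacts [Or.inl hzC, Or.inr ⟨hz, hzC, c, hc, hcz⟩]

theorem exists_nonadj_isSimplicialIn [Finite V] (hG : G.Chordal) (s : Set V)
    (hs : ¬ G.IsClique s) :
    ∃ u ∈ s, ∃ v ∈ s, u ≠ v ∧ ¬ G.Adj u v ∧ G.IsSimplicialIn s u ∧ G.IsSimplicialIn s v := by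
  induction s using WellFoundedLT.induction with
  | _ s ih =>
  obtain ⟨x, hx, y, hy, hxy, hnxy⟩ : ∃ x ∈ s, ∃ y ∈ s, x ≠ y ∧ ¬ G.Adj x y := by
    simpa [IsClique, Set.Pairwise] using hs
  obtain ⟨C, S, hyC, hCS, hxCS, hCSs, hS, hC⟩ := hG.exists_clique_separator hy hxy hnxy
  set D := s \ (C ∪ S)
  have hD : ∀ d ∈ D, ∀ z ∈ s, G.Adj d z → z ∈ D ∪ S := by
    rintro d ⟨hds, hdCS⟩ z hz hdz
    by_cases hzC : z ∈ C
    · exact absurd (hC z hzC d hds hdz.symm) hdCS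
    by_cases hzS : z ∈ S
    · exact Or.inr hzS
    · exact Or.inl ⟨hz, by simp [hzC, hzS]⟩
  obtain ⟨u, hu, hsu⟩ := exists_isSimplicialIn_of_separator ⟨y, hyC⟩ hS hC
    (ih _ ((Set.ssubset_iff_of_subset hCSs).2 ⟨x, hx, hxCS⟩))
  have hDSs : D ∪ S ⊆ s := Set.union_subset Set.sdiff_subset (Set.subset_union_right.trans hCSs)
  obtain ⟨v, hv, hsv⟩ := exists_isSimplicialIn_of_separator (C := D) ⟨x, hx, hxCS⟩ hS hD
    (ih _ ((Set.ssubset_iff_of_subset hDSs).2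
      ⟨y, hy, by rintro (⟨-, h⟩ | h); exacts [h (.inl hyC), hCS.notMem_of_mem_left hyC h]⟩))
  refine ⟨u, hCSs (.inl hu), v, hv.1, ?_, fun huv ↦ hv.2 (hC u hu v hv.1 huv), hsu, hsv⟩
  rintro rfl
  exact hv.2 (.inl hu)

end Chordal

end SimpleGraph

theorem chordal_complete_or_simplicial_vertex_general {V : Type*} [Fintype V]
    (G : SimpleGraph V) (h : G.Chordal) :
    (∀ u v : V, u ≠ v → G.Adj u v) ∨ ∃ v : V, G.IsClique (G.neighborSet v) := by
  by_cases hcomplete : G.IsClique Set.univ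
  · exact Or.inl fun u v huv ↦ hcomplete trivial trivial huv
  · obtain ⟨u, -, -, -, -, -, hu, -⟩ := h.exists_nonadj_isSimplicialIn Set.univ hcomplete
    exact Or.inr ⟨u, by simpa [SimpleGraph.IsSimplicialIn] using hu⟩

/-- Every finite chordal graph is either complete or has a simplicial vertex,
i.e. a vertex whose neighbourhood is a clique. -/
theorem chordal_complete_or_simplicial_vertex {V : Type*} [Fintype V] [Nonempty V]
    (G : SimpleGraph V) (h : G.Chordal) :
    (∀ u v : V, u ≠ v → G.Adj u v) ∨ ∃ v : V, G.IsClique (G.neighborSet v) :=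
  chordal_complete_or_simplicial_vertex_general G h
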